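/- The system mZ_n is paraconsistent: there exist a propositional variable p and a propositional variable q such that q is not derivable from the hypotheses {p, ¬p} in mZ_n. Concretely, the two-valued valuation interpreting ∧, ∨, ⇒ classically, 0 as false, 1 as true, and ¬A as true for every formula A, validates all axioms of mZ_n, is closed under Modus Ponens, makes p and ¬p true, but makes q false. -/
import Mathlib


inductive Fm where
  | var : Nat → Fm
  | bot : Fm
  | top : Fm
  | neg : Fm → Fm
  | and : Fm → Fm → Fm
  | or  : Fm → Fm → Fm
  | imp : Fm → Fm → Fm
deriving DecidableEq

open Fm

/-- Axioms (1)-(8) of positive intuitionistic propositional calculus IPC⁺. -/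
def PosAx (f : Fm) : Prop := ∃ A B C,
  f = imp A (imp B A) ∨
  f = imp (imp A B) (imp (imp A (imp B C)) (imp A C)) ∨
  f = imp A (imp B (Fm.and A B)) ∨
  f = imp (Fm.and A B) A ∨
  f = imp (Fm.and A B) B ∨
  f = imp A (Fm.or A B) ∨
  f = imp B (Fm.or A B) ∨
  f = imp (imp A C) (imp (imp B C) (imp (Fm.or A B) C))

/-- Axiom (9b): contraposition. -/
def Ax9b (f : Fm) : Prop := ∃ A B, f = imp (imp A B) (imp (neg B) (neg A))

/-- Axiom (10b)': 1 ⇒ ¬0. -/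
def Ax10b' (f : Fm) : Prop := f = imp Fm.top (neg Fm.bot)

/-- Axiom (11b): A ⇒ 1 and 0 ⇒ A. -/
def Ax11b (f : Fm) : Prop := ∃ A, f = imp A Fm.top ∨ f = imp Fm.bot A

/-- Axiom (12b): (¬A ∧ ¬B) ⇒ ¬(A ∨ B). -/
def Ax12b (f : Fm) : Prop := ∃ A B, f = imp (Fm.and (neg A) (neg B)) (neg (Fm.or A B))

/-- Axiom (13b): ¬(A ∧ B) ⇒ (¬A ∨ ¬B). -/
def Ax13b (f : Fm) : Prop := ∃ A B, f = imp (neg (Fm.and A B)) (Fm.or (neg A) (neg B))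

/-- Axioms of the system mZ_n. -/
def MZAx (f : Fm) : Prop := PosAx f ∨ Ax9b f ∨ Ax10b' f ∨ Ax11b f ∨ Ax12b f

/-- Axioms of the system mCZ_n. -/
def MCZAx (f : Fm) : Prop := MZAx f ∨ Ax13b f

/-- Hilbert-style derivability from hypotheses H with axiom set Ax; Modus Ponens only rule. -/
inductive Deriv (Ax : Fm → Prop) (H : Set Fm) : Fm → Prop
  | ax  {f : Fm} : Ax f → Deriv Ax H f
  | hyp {f : Fm} : f ∈ H → Deriv Ax H f
  | mp  {A B : Fm} : Deriv Ax H (imp A B) → Deriv Ax H A → Deriv Ax H B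

/-- A° = ¬(A ∧ ¬A). -/
def circ (A : Fm) : Fm := neg (Fm.and A (neg A))

/-- Aⁿ : n-fold application of °, A⁰ = A. -/
def pow (A : Fm) : Nat → Fm
  | 0 => A
  | n + 1 => circ (pow A n)

/-- A^{(n)} = A¹ ∧ A² ∧ … ∧ Aⁿ (for n ≥ 1; conventionally ⊤ for n = 0). -/
def conN (A : Fm) : Nat → Fm
  | 0 => Fm.top
  | 1 => pow A 1
  | n + 2 => Fm.and (conN A (n + 1)) (pow A (n + 2))

/-- Two-valued valuation: positive connectives classical, every negation true. -/
def ev (val : Nat → Bool) : Fm → Bool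
  | Fm.var n => val n
  | Fm.bot => false
  | Fm.top => true
  | Fm.neg _ => true
  | Fm.and A B => ev val A && ev val B
  | Fm.or A B => ev val A || ev val B
  | Fm.imp A B => !(ev val A) || ev val B


lemma mzax_ev (v : Nat → Bool) (f : Fm) (h : MZAx f) : ev v f = true := by
  rcases h with ⟨A,B,C,h⟩|⟨A,B,h⟩|h|⟨A,h|h⟩|⟨A,B,h⟩
  · rcases h with h|h|h|h|h|h|h|h <;> subst h <;> simp [ev] <;>
      cases ev v A <;> cases ev v B <;> cases ev v C <;> simp
  all_goals subst h <;> simp [ev]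

lemma sound (v : Nat → Bool) (H : Set Fm) (hH : ∀ f ∈ H, ev v f = true)
    (f : Fm) (h : Deriv MZAx H f) : ev v f = true := by
  induction h with
  | ax ha => exact mzax_ev v _ ha
  | hyp hm => exact hH _ hm
  | mp _ _ ih1 ih2 =>
      simp [ev] at ih1
      rcases ih1 with h|h
      · rw [ih2] at h; cases h
      · exact h

theorem stmt11 : ∃ p q : Nat, p ≠ q ∧
    ¬ Deriv MZAx {Fm.var p, neg (Fm.var p)} (Fm.var q) ∧
    (∀ f, MZAx f → ev (fun n => n = p) f = true) ∧
    (∀ A B, ev (fun n => n = p) (imp A B) = true → ev (fun n => n = p) A = true →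
      ev (fun n => n = p) B = true) ∧
    ev (fun n => n = p) (Fm.var p) = true ∧
    ev (fun n => n = p) (neg (Fm.var p)) = true ∧
    ev (fun n => n = p) (Fm.var q) = false := by
  refine ⟨0, 1, by norm_num, ?_, fun f h => mzax_ev _ f h, ?_, by simp [ev], by simp [ev], by simp [ev]⟩
  · intro hd
    have := sound (fun n => n = 0) _ ?_ _ hd
    · simp [ev] at this
    · rintro f hf
      rcases hf with rfl|rfl <;> simp [ev]
  · intro A B h1 h2
    simp [ev] at h1
    rcases h1 with h|h
    · rw [h2] at h; cases h
    · exact h
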